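/- Let U : H₁ → H₂ be unitary between Hilbert spaces with orthogonal projections P₁, P₂, and block operators U₊₊ = P₂UP₁ (viewed as an operator ran P₁ → ran P₂) and U₋₋ = (I−P₂)U(I−P₁) (viewed ran(I−P₁) → ran(I−P₂)). If U₊₊ and U₋₋ are both Fredholm, then ind(U₊₊) = −ind(U₋₋). -/

import Mathlib

/-!
For `x ∈ ran P₁` we have `x ∈ ker U₊₊` iff `U x ⟂ ran P₂`, i.e. `U x ∈ ran (1 - P₂)`. Sending
such `x` to the class of `U x` modulo `ran U₋₋` is injective because `U` preserves inner products
and `ran P₁ ⟂ ran (1 - P₁)`. It is surjective because a vector of `ran (1 - P₂)` orthogonal to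
`ran U₋₋` is pulled back by `U⁻¹ = U*` into `(ran (1 - P₁))ᗮ = ran P₁`; this orthogonal
decomposition needs `ran U₋₋` closed, which follows from its finite codimension. Hence
`ker U₊₊ ≅ coker U₋₋` and, exchanging `P` with `1 - P`, `ker U₋₋ ≅ coker U₊₊`.
-/

/-- A bounded operator between normed spaces is Fredholm if it has finite-dimensional kernel
and finite-dimensional cokernel. -/
def IsFredholm {X Y : Type*} [NormedAddCommGroup X] [NormedSpace ℂ X]
    [NormedAddCommGroup Y] [NormedSpace ℂ Y] (T : X →L[ℂ] Y) : Prop :=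
  FiniteDimensional ℂ (LinearMap.ker (T : X →ₗ[ℂ] Y)) ∧ FiniteDimensional ℂ (Y ⧸ LinearMap.range (T : X →ₗ[ℂ] Y))

/-- The Fredholm index `dim ker T − dim coker T`. -/
noncomputable def fredholmIndex {X Y : Type*} [NormedAddCommGroup X] [NormedSpace ℂ X]
    [NormedAddCommGroup Y] [NormedSpace ℂ Y] (T : X →L[ℂ] Y) : ℤ :=
  (Module.finrank ℂ (LinearMap.ker (T : X →ₗ[ℂ] Y)) : ℤ) - (Module.finrank ℂ (Y ⧸ LinearMap.range (T : X →ₗ[ℂ] Y)) : ℤ)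

section

open Submodule ContinuousLinearMap

theorem ContinuousLinearMap.isClosed_range_of_finiteDimensional_quotient {𝕜 E F : Type*}
    [NontriviallyNormedField 𝕜] [CompleteSpace 𝕜] [NormedAddCommGroup E] [NormedSpace 𝕜 E]
    [CompleteSpace E] [NormedAddCommGroup F] [NormedSpace 𝕜 F] [CompleteSpace F] (T : E →L[𝕜] F)
    [FiniteDimensional 𝕜 (F ⧸ LinearMap.range (T : E →ₗ[𝕜] F))] :
    IsClosed (LinearMap.range (T : E →ₗ[𝕜] F) : Set F) := by
  obtain ⟨G, hG⟩ := (LinearMap.range (T : E →ₗ[𝕜] F)).exists_isCompl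
  have : FiniteDimensional 𝕜 G := (quotientEquivOfIsCompl _ G hG).finiteDimensional
  have : IsClosed (LinearMap.ker (T : E →ₗ[𝕜] F) : Set E) := T.isClosed_ker
  -- `T` factors through the injective map `E ⧸ ker T → F`, whose range has a closed complement.
  let T' := (LinearMap.ker (T : E →ₗ[𝕜] F)).liftQL T le_rfl
  have hrange : LinearMap.range (T' : E ⧸ LinearMap.ker (T : E →ₗ[𝕜] F) →ₗ[𝕜] F) =
      LinearMap.range (T : E →ₗ[𝕜] F) :=
    range_liftQ _ (T : E →ₗ[𝕜] F) le_rfl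
  rw [← hrange] at hG ⊢
  exact T'.closed_complemented_range_of_isCompl_of_ker_eq_bot G hG G.closed_of_finiteDimensional
    (ker_liftQ_eq_bot _ _ _ le_rfl)

variable {𝕜 E F : Type*} [RCLike 𝕜] [NormedAddCommGroup E] [InnerProductSpace 𝕜 E]
  [NormedAddCommGroup F] [InnerProductSpace 𝕜 F]

theorem ContinuousLinearMap.exists_linearIsometryEquiv_of_adjoint_comp [CompleteSpace E]
    [CompleteSpace F] (U : E →L[𝕜] F) (hU₁ : adjoint U ∘L U = 1) (hU₂ : U ∘L adjoint U = 1) :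
    ∃ V : E ≃ₗᵢ[𝕜] F, ⇑V = U :=
  ⟨.ofSurjective ⟨U, (norm_map_iff_adjoint_comp_self U).mpr hU₁⟩
    fun y => ⟨adjoint U y, by simpa using congr($hU₂ y)⟩, rfl⟩

theorem IsStarProjection.completeSpace_range [CompleteSpace E] {P : E →L[𝕜] E}
    (hP : IsStarProjection P) : CompleteSpace (LinearMap.range (P : E →ₗ[𝕜] E)) :=
  (IsIdempotentElem.isClosed_range hP.isIdempotentElem).completeSpace_coe

theorem IsStarProjection.orthogonal_range [CompleteSpace E] {P : E →L[𝕜] E}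
    (hP : IsStarProjection P) :
    (LinearMap.range (P : E →ₗ[𝕜] E))ᗮ = LinearMap.range ((1 - P : E →L[𝕜] E) : E →ₗ[𝕜] E) := by
  rw [hP.isSymmetricProjection.isSymmetric.orthogonal_range,
    LinearMap.IsIdempotentElem.ker_eq_range_one_sub hP.isSymmetricProjection.isIdempotentElem]
  rfl

theorem IsStarProjection.orthogonal_range_one_sub [CompleteSpace E] {P : E →L[𝕜] E}
    (hP : IsStarProjection P) :
    (LinearMap.range ((1 - P : E →L[𝕜] E) : E →ₗ[𝕜] E))ᗮ = LinearMap.range (P : E →ₗ[𝕜] E) := by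
  simpa using hP.one_sub.orthogonal_range

theorem IsStarProjection.sub_apply_mem_orthogonal_range [CompleteSpace E] {P : E →L[𝕜] E}
    (hP : IsStarProjection P) (y : E) : y - P y ∈ (LinearMap.range (P : E →ₗ[𝕜] E))ᗮ := by
  rw [hP.orthogonal_range]
  exact ⟨y, rfl⟩

/-- `A` and `D` are the compressions of `U` to `K₁ → K₂` and to `K₁ᗮ → K₂ᗮ`; the complements are
named `L₁, L₂` with `K₁ = L₁ᗮ` so that the lemma also applies with the two blocks exchanged. -/
theorem nonempty_ker_equiv_quotient_range_of_compressions [CompleteSpace F]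
    (U : E ≃ₗᵢ[𝕜] F) {K₁ L₁ : Submodule 𝕜 E} {K₂ L₂ : Submodule 𝕜 F}
    (hK₁ : K₁ = L₁ᗮ) (hL₂ : L₂ = K₂ᗮ)
    (A : K₁ →L[𝕜] K₂) (hA : ∀ x : K₁, U x - A x ∈ K₂ᗮ)
    (D : L₁ →L[𝕜] L₂) (hD : ∀ x : L₁, U x - D x ∈ L₂ᗮ)
    (hD_closed : IsClosed (LinearMap.range (D : L₁ →ₗ[𝕜] L₂) : Set L₂)) :
    Nonempty (LinearMap.ker (A : K₁ →ₗ[𝕜] K₂) ≃ₗ[𝕜] L₂ ⧸ LinearMap.range (D : L₁ →ₗ[𝕜] L₂)) := by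
  subst hK₁ hL₂
  set R := LinearMap.range (D : L₁ →ₗ[𝕜] K₂ᗮ)
  have : CompleteSpace R := hD_closed.completeSpace_coe
  have hD_inner (v : L₁) (w : K₂ᗮ) : inner 𝕜 (U v) (w : F) = inner 𝕜 (D v : F) w := by
    rw [← sub_eq_zero, ← inner_sub_left]
    exact inner_left_of_mem_orthogonal w.2 (hD v)
  have hU_ker (x : LinearMap.ker (A : L₁ᗮ →ₗ[𝕜] K₂)) : U x ∈ K₂ᗮ := by
    simpa [LinearMap.mem_ker.mp x.2] using hA x
  let φ := R.mkQ ∘ₗ LinearMap.codRestrict K₂ᗮ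
    ((U : E →ₗ[𝕜] F) ∘ₗ L₁ᗮ.subtype ∘ₗ (LinearMap.ker (A : L₁ᗮ →ₗ[𝕜] K₂)).subtype) hU_ker
  refine ⟨LinearEquiv.ofBijective φ ⟨?injective, ?surjective⟩⟩
  case injective =>
    rw [← LinearMap.ker_eq_bot, eq_bot_iff]
    intro x hx
    obtain ⟨z, hz⟩ : _ ∈ R := (Quotient.mk_eq_zero R).mp hx
    have hUx : U x = D z := congr(($hz : F)).symm
    have : inner 𝕜 (U x) (U x) = 0 :=
      calc inner 𝕜 (U x) (U x) = inner 𝕜 (D z : F) (U x) := by rw [← hUx]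
        _ = inner 𝕜 (U z) (U x) := (hD_inner z ⟨_, hU_ker x⟩).symm
        _ = 0 := by rw [U.inner_map_map]; exact inner_right_of_mem_orthogonal z.2 x.1.2
    simpa using this
  case surjective =>
    intro q
    obtain ⟨y, rfl⟩ := R.mkQ_surjective q
    obtain ⟨d, hd, w, hw, rfl⟩ := R.exists_add_mem_mem_orthogonal y
    have hu : U.symm w ∈ L₁ᗮ := fun v hv => by
      rw [← U.inner_map_eq_flip, hD_inner ⟨v, hv⟩]
      exact inner_right_of_mem_orthogonal (K := R) (LinearMap.mem_range_self _ _) hw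
    have hAu : A ⟨U.symm w, hu⟩ = 0 := by
      have : (A ⟨U.symm w, hu⟩ : F) ∈ K₂ᗮ := by
        simpa using K₂ᗮ.sub_mem w.2 (hA ⟨_, hu⟩)
      exact Subtype.ext ((mem_bot 𝕜).mp (K₂.orthogonal_disjoint.le_bot ⟨(A _).2, this⟩))
    refine ⟨⟨⟨U.symm w, hu⟩, hAu⟩, ?_⟩
    have hφ : φ ⟨⟨U.symm w, hu⟩, hAu⟩ = R.mkQ w :=
      congrArg R.mkQ (Subtype.ext (U.apply_symm_apply w))
    rw [hφ, map_add, R.mkQ_apply d, (Quotient.mk_eq_zero R).mpr hd, zero_add]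

end

/-- For a unitary `U : H₁ → H₂` with orthogonal projections `P₁, P₂`, if the diagonal blocks
`U₊₊ : ran P₁ → ran P₂` and `U₋₋ : ran(1−P₁) → ran(1−P₂)` are both Fredholm, then
`ind U₊₊ = − ind U₋₋`. -/
theorem index_diagonal_blocks {H₁ H₂ : Type*}
    [NormedAddCommGroup H₁] [InnerProductSpace ℂ H₁] [CompleteSpace H₁]
    [NormedAddCommGroup H₂] [InnerProductSpace ℂ H₂] [CompleteSpace H₂]
    (U : H₁ →L[ℂ] H₂)
    (hU₁ : (ContinuousLinearMap.adjoint U).comp U = ContinuousLinearMap.id ℂ H₁)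
    (hU₂ : U.comp (ContinuousLinearMap.adjoint U) = ContinuousLinearMap.id ℂ H₂)
    (P₁ : H₁ →L[ℂ] H₁) (P₂ : H₂ →L[ℂ] H₂)
    (hP₁a : ContinuousLinearMap.adjoint P₁ = P₁) (hP₁i : P₁.comp P₁ = P₁)
    (hP₂a : ContinuousLinearMap.adjoint P₂ = P₂) (hP₂i : P₂.comp P₂ = P₂)
    (Vpp : ↥(LinearMap.range (P₁ : H₁ →ₗ[ℂ] H₁)) →L[ℂ] ↥(LinearMap.range (P₂ : H₂ →ₗ[ℂ] H₂)))
    (hVpp : ∀ x : ↥(LinearMap.range (P₁ : H₁ →ₗ[ℂ] H₁)), (Vpp x : H₂) = P₂ (U (x : H₁)))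
    (Vmm : ↥(LinearMap.range ((1 - P₁ : H₁ →L[ℂ] H₁) : H₁ →ₗ[ℂ] H₁)) →L[ℂ] ↥(LinearMap.range ((1 - P₂ : H₂ →L[ℂ] H₂) : H₂ →ₗ[ℂ] H₂)))
    (hVmm : ∀ x : ↥(LinearMap.range ((1 - P₁ : H₁ →L[ℂ] H₁) : H₁ →ₗ[ℂ] H₁)), (Vmm x : H₂) = (1 - P₂) (U (x : H₁)))
    (hFpp : IsFredholm Vpp) (hFmm : IsFredholm Vmm) :
    fredholmIndex Vpp = - fredholmIndex Vmm := by
  obtain ⟨V, hV⟩ := U.exists_linearIsometryEquiv_of_adjoint_comp hU₁ hU₂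
  have hP₁ : IsStarProjection P₁ := ⟨hP₁i, hP₁a⟩
  have hP₂ : IsStarProjection P₂ := ⟨hP₂i, hP₂a⟩
  have := hP₁.completeSpace_range; have := hP₁.one_sub.completeSpace_range
  have := hP₂.completeSpace_range; have := hP₂.one_sub.completeSpace_range
  have := hFpp.2; have := hFmm.2
  have hVpp' (x : LinearMap.range (P₁ : H₁ →ₗ[ℂ] H₁)) :
      V x - Vpp x ∈ (LinearMap.range (P₂ : H₂ →ₗ[ℂ] H₂))ᗮ := by
    rw [hV, hVpp]; exact hP₂.sub_apply_mem_orthogonal_range _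
  have hVmm' (x : LinearMap.range ((1 - P₁ : H₁ →L[ℂ] H₁) : H₁ →ₗ[ℂ] H₁)) :
      V x - Vmm x ∈ (LinearMap.range ((1 - P₂ : H₂ →L[ℂ] H₂) : H₂ →ₗ[ℂ] H₂))ᗮ := by
    rw [hV, hVmm]; exact hP₂.one_sub.sub_apply_mem_orthogonal_range _
  obtain ⟨e₁⟩ := nonempty_ker_equiv_quotient_range_of_compressions V
    hP₁.orthogonal_range_one_sub.symm hP₂.orthogonal_range.symm
    Vpp hVpp' Vmm hVmm' Vmm.isClosed_range_of_finiteDimensional_quotient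
  obtain ⟨e₂⟩ := nonempty_ker_equiv_quotient_range_of_compressions V
    hP₁.orthogonal_range.symm hP₂.orthogonal_range_one_sub.symm
    Vmm hVmm' Vpp hVpp' Vpp.isClosed_range_of_finiteDimensional_quotient
  rw [fredholmIndex, fredholmIndex, e₁.finrank_eq, e₂.finrank_eq]
  ring
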